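/- (Kummer-type congruence for v-adic multiple zeta values.) Let e ≥ 1, r ≥ 1, and let (m_1,…,m_r), (l_1,…,l_r) ∈ ℤ_{≥0}^r satisfy m_i ≡ l_i mod (q^d − 1)·q^{(e−1)d} for all 1 ≤ i ≤ r. Then ζ_v(−m_1,…,−m_r) ≡ ζ_v(−l_1,…,−l_r) mod v^e in A, i.e., v^e divides ζ_v(−m_1,…,−m_r) − ζ_v(−l_1,…,−l_r). -/

import Mathlib

/-!
For `n` prime to `v`, `n ^ (q ^ d - 1) ≡ 1 [v]` since `A ⧸ (v)` is a field with `q ^ d`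
elements. Raising to the power `q ^ ((e - 1) d)` of the characteristic is additive (Frobenius),
so `n ^ N ≡ 1 [v ^ q ^ ((e - 1) d)]` for `N = (q ^ d - 1) q ^ ((e - 1) d)`, and
`e ≤ q ^ ((e - 1) d)`. Thus `n ^ m ≡ n ^ l [v ^ e]` whenever `m ≡ l [N]`, which passes to the
power sums `S̃_i` and to the sum defining `ζ_v`.

That sum is finite: `S_i(-m) = 0` for `i > m`, because summing `(a + ∑ j, c j • b j) ^ k` over
all `c : Fin i → 𝔽_q` gives `0` when `k < i`, and `S̃_i(-m) = S_i(-m) - v ^ m S_{i-d}(-m)`.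
-/

open Polynomial

/-- The power sum `S_i(-m)`: the sum of `n ^ m` over monic polynomials `n` of degree `i`. -/
noncomputable def powerSum (F : Type*) [Field F] [Fintype F] (i m : ℕ) : Polynomial F :=
  ∑ᶠ n ∈ {n : Polynomial F | n.Monic ∧ n.natDegree = i}, n ^ m

/-- The restricted power sum `S̃_i(-m)`: the sum of `n ^ m` over monic polynomials `n` of
degree `i` not divisible by `v`. -/
noncomputable def powerSumV (F : Type*) [Field F] [Fintype F] (v : Polynomial F) (i m : ℕ) :
    Polynomial F :=
  ∑ᶠ n ∈ {n : Polynomial F | n.Monic ∧ n.natDegree = i ∧ ¬ v ∣ n}, n ^ m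

/-- `ζ_∞(-m_1, …, -m_r)`, the ∞-adic multiple zeta value at nonpositive integers:
the sum over `i_1 > ⋯ > i_r ≥ 0` of `S_{i_1}(-m_1) ⋯ S_{i_r}(-m_r)`.
Only `m 0, …, m (r-1)` are used.  The depth-0 value is `1`. -/
noncomputable def zetaInf (F : Type*) [Field F] [Fintype F] (r : ℕ) (m : ℕ → ℕ) :
    Polynomial F :=
  ∑ᶠ i ∈ {i : Fin r → ℕ | StrictAnti i}, ∏ j : Fin r, powerSum F (i j) (m (j : ℕ))

/-- `ζ⋆_∞(-m_1, …, -m_r)`, the ∞-adic multiple zeta star value at nonpositive integers: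
the sum over `i_1 ≥ ⋯ ≥ i_r ≥ 0` of `S_{i_1}(-m_1) ⋯ S_{i_r}(-m_r)`. -/
noncomputable def zetaInfStar (F : Type*) [Field F] [Fintype F] (r : ℕ) (m : ℕ → ℕ) :
    Polynomial F :=
  ∑ᶠ i ∈ {i : Fin r → ℕ | Antitone i}, ∏ j : Fin r, powerSum F (i j) (m (j : ℕ))

/-- `ζ_v(-m_1, …, -m_r)`, the v-adic multiple zeta value at nonpositive integers. -/
noncomputable def zetaV (F : Type*) [Field F] [Fintype F] (v : Polynomial F) (r : ℕ)
    (m : ℕ → ℕ) : Polynomial F :=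
  ∑ᶠ i ∈ {i : Fin r → ℕ | StrictAnti i}, ∏ j : Fin r, powerSumV F v (i j) (m (j : ℕ))

/-- `ζ⋆_v(-m_1, …, -m_r)`, the v-adic multiple zeta star value at nonpositive integers. -/
noncomputable def zetaVStar (F : Type*) [Field F] [Fintype F] (v : Polynomial F) (r : ℕ)
    (m : ℕ → ℕ) : Polynomial F :=
  ∑ᶠ i ∈ {i : Fin r → ℕ | Antitone i}, ∏ j : Fin r, powerSumV F v (i j) (m (j : ℕ))

/-- `ζ_{<d}(-m_1, …, -m_r)`, the truncated multiple zeta value: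
the sum over `d > i_1 > ⋯ > i_r ≥ 0` of `S_{i_1}(-m_1) ⋯ S_{i_r}(-m_r)`. -/
noncomputable def zetaLt (F : Type*) [Field F] [Fintype F] (d r : ℕ) (m : ℕ → ℕ) :
    Polynomial F :=
  ∑ᶠ i ∈ {i : Fin r → ℕ | StrictAnti i ∧ ∀ j, i j < d},
    ∏ j : Fin r, powerSum F (i j) (m (j : ℕ))

/-- `ζ⋆_{<d}(-m_1, …, -m_r)`, the truncated multiple zeta star value. -/
noncomputable def zetaLtStar (F : Type*) [Field F] [Fintype F] (d r : ℕ) (m : ℕ → ℕ) :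
    Polynomial F :=
  ∑ᶠ i ∈ {i : Fin r → ℕ | Antitone i ∧ ∀ j, i j < d},
    ∏ j : Fin r, powerSum F (i j) (m (j : ℕ))

/-- `ζ_{<d}(-m)`, the depth-one truncated zeta value `Σ_{d > i ≥ 0} S_i(-m)`. -/
noncomputable def zetaLtOne (F : Type*) [Field F] [Fintype F] (d m : ℕ) : Polynomial F :=
  ∑ᶠ i ∈ {i : ℕ | i < d}, powerSum F i m

theorem sum_pow_add_sum_smul_eq_zero {K R : Type*} [Field K] [Fintype K] [CommRing R]
    [Algebra K R] {i k : ℕ} (hk : k < i) (a : R) (b : Fin i → R) :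
    ∑ c : Fin i → K, (a + ∑ j, c j • b j) ^ k = 0 := by
  induction i generalizing k a with
  | zero => omega
  | succ i ih =>
    -- Binomially expanding in `x • b 0`, every term but the first dies by induction (`k ≤ i`),
    -- so the inner sum is independent of `x`; summing it over `x : K` multiplies it by `q = 0`.
    have hshift : ∀ x : K, ∑ c : Fin i → K, (a + (x • b 0 + ∑ j, c j • b j.succ)) ^ k =
        ∑ c : Fin i → K, (a + ∑ j, c j • b j.succ) ^ k := by
      intro x
      simp_rw [add_left_comm a, add_pow (x • b 0)]
      rw [Finset.sum_comm, Finset.sum_range_succ']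
      have hvanish : ∀ n ∈ Finset.range k, ∑ c : Fin i → K,
          (x • b 0) ^ (n + 1) * (a + ∑ j, c j • b j.succ) ^ (k - (n + 1)) *
            (k.choose (n + 1)) = 0 := by
        intro n hn
        have := Finset.mem_range.mp hn
        rw [← Finset.sum_mul, ← Finset.mul_sum, ih (by omega), mul_zero, zero_mul]
      simp [Finset.sum_eq_zero hvanish]
    rw [← (Fin.consEquiv fun _ => K).sum_comp, Fintype.sum_prod_type]
    simp only [Fin.consEquiv_apply, Fin.sum_univ_succ, Fin.cons_zero, Fin.cons_succ, hshift,
      Finset.sum_const, Finset.card_univ, ← Nat.cast_smul_eq_nsmul K,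
      FiniteField.cast_card_eq_zero, zero_smul]

namespace Polynomial

variable {R : Type*} [CommRing R]

theorem image_mul_setOf_monic_natDegree_eq {v : R[X]} (hv : v.Monic) {i : ℕ}
    (hi : v.natDegree ≤ i) :
    (v * ·) '' {w | w.Monic ∧ w.natDegree = i - v.natDegree} =
      {n | n.Monic ∧ n.natDegree = i} ∩ {n | v ∣ n} := by
  ext n
  constructor
  · rintro ⟨w, ⟨hw, hdeg⟩, rfl⟩
    exact ⟨⟨hv.mul hw, by rw [hv.natDegree_mul hw, hdeg]; omega⟩, dvd_mul_right v w⟩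
  · rintro ⟨⟨hn, hdeg⟩, w, rfl⟩
    have hw : w.Monic := hv.of_mul_monic_left hn
    exact ⟨w, ⟨hw, by rw [hv.natDegree_mul hw] at hdeg; omega⟩, rfl⟩

variable [Nontrivial R]

noncomputable def monicEquivFun (i : ℕ) :
    (Fin i → R) ≃ {p : R[X] | p.Monic ∧ p.natDegree = i} :=
  (degreeLTEquiv R i).toEquiv.symm.trans (monicEquivDegreeLT i).symm

theorem coe_monicEquivFun_apply (i : ℕ) (c : Fin i → R) :
    (monicEquivFun i c : R[X]) = X ^ i + ∑ j, c j • X ^ (j : ℕ) := by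
  simp [monicEquivFun, monicEquivDegreeLT, degreeLTEquiv, smul_X_eq_monomial]

theorem finite_setOf_monic_natDegree_eq [Finite R] (i : ℕ) :
    {p : R[X] | p.Monic ∧ p.natDegree = i}.Finite :=
  have := Finite.of_equiv _ (monicEquivFun (R := R) i)
  Set.toFinite _

theorem finsum_mem_monic_natDegree_eq {M : Type*} [AddCommMonoid M] [Fintype R] (i : ℕ)
    (f : R[X] → M) : ∑ᶠ p ∈ {p : R[X] | p.Monic ∧ p.natDegree = i}, f p =
      ∑ c : Fin i → R, f (X ^ i + ∑ j, c j • X ^ (j : ℕ)) := by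
  rw [← finsum_set_coe_eq_finsum_mem, ← finsum_comp_equiv (monicEquivFun i),
    finsum_eq_sum_of_fintype]
  simp only [coe_monicEquivFun_apply]

end Polynomial

theorem map_finsum_mem_congr {α M N G : Type*} [AddCommMonoid M] [AddCommMonoid N]
    [FunLike G M N] [AddMonoidHomClass G M N] (φ : G) {s : Set α} {f g : α → M}
    (hf : (s ∩ Function.support f).Finite) (hg : (s ∩ Function.support g).Finite)
    (h : ∀ i ∈ s, φ (f i) = φ (g i)) : φ (∑ᶠ i ∈ s, f i) = φ (∑ᶠ i ∈ s, g i) := by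
  rw [← AddMonoidHom.coe_coe, AddMonoidHom.map_finsum_mem' _ hf, AddMonoidHom.map_finsum_mem' _ hg]
  exact finsum_mem_congr rfl h

section

variable {F : Type*} [Field F] [Fintype F]

theorem powerSum_eq_zero_of_lt {i m : ℕ} (hm : m < i) : powerSum F i m = 0 := by
  rw [powerSum, finsum_mem_monic_natDegree_eq]
  exact sum_pow_add_sum_smul_eq_zero hm _ _

theorem powerSumV_eq_zero_of_lt {v : F[X]} (hv : v.Monic) {i m : ℕ} (hm : m + v.natDegree < i) :
    powerSumV F v i m = 0 := by
  have hmultiples : ∑ᶠ n ∈ {n : F[X] | n.Monic ∧ n.natDegree = i} ∩ {n | v ∣ n}, n ^ m = 0 := by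
    rw [← image_mul_setOf_monic_natDegree_eq hv (by omega),
      finsum_mem_image (mul_right_injective₀ hv.ne_zero).injOn]
    simp only [mul_pow]
    rw [← mul_finsum_mem, ← powerSum, powerSum_eq_zero_of_lt (by omega), mul_zero]
  have hall : powerSum F i m = 0 := powerSum_eq_zero_of_lt (by omega)
  rw [powerSum, ← finsum_mem_inter_add_sdiff {n | v ∣ n} (finite_setOf_monic_natDegree_eq i),
    hmultiples, zero_add] at hall
  have hset : {n : F[X] | n.Monic ∧ n.natDegree = i ∧ ¬ v ∣ n} =
      {n | n.Monic ∧ n.natDegree = i} \ {n | v ∣ n} := by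
    ext n
    simp [and_assoc]
  rw [powerSumV, hset, hall]

theorem dvd_pow_card_pow_natDegree_sub_one_sub_one {v n : F[X]} (hv : Irreducible v)
    (hn : ¬ v ∣ n) : v ∣ n ^ (Fintype.card F ^ v.natDegree - 1) - 1 := by
  have := Fact.mk hv
  let pb := AdjoinRoot.powerBasis hv.ne_zero
  have : Module.Finite F (AdjoinRoot v) := pb.finite
  have : Finite (AdjoinRoot v) := Module.finite_of_finite F
  let : Fintype (AdjoinRoot v) := Fintype.ofFinite _
  have hcard : Fintype.card (AdjoinRoot v) = Fintype.card F ^ v.natDegree := by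
    rw [Module.card_eq_pow_finrank (K := F), pb.finrank, AdjoinRoot.powerBasis_dim]
  rw [← AdjoinRoot.mk_eq_zero, map_sub, map_pow, map_one, ← hcard,
    FiniteField.pow_card_sub_one_eq_one _ (by rwa [Ne, AdjoinRoot.mk_eq_zero]), sub_self]

theorem pow_dvd_pow_sub_one_of_not_dvd {v n : F[X]} (hv : Irreducible v) (hn : ¬ v ∣ n) (e : ℕ) :
    v ^ e ∣ n ^ ((Fintype.card F ^ v.natDegree - 1) *
      Fintype.card F ^ ((e - 1) * v.natDegree)) - 1 := by
  obtain ⟨s, hp, hq⟩ := FiniteField.card F (ringChar F)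
  have := Fact.mk hp
  set q := Fintype.card F
  have hfrob (k : ℕ) : v ^ ringChar F ^ k ∣ (n ^ (q ^ v.natDegree - 1)) ^ ringChar F ^ k - 1 := by
    simpa only [sub_pow_expChar_pow, one_pow] using
      pow_dvd_pow_of_dvd (dvd_pow_card_pow_natDegree_sub_one_sub_one hv hn) (ringChar F ^ k)
  have he : e ≤ q ^ ((e - 1) * v.natDegree) := by
    have h1 : e - 1 < q ^ (e - 1) := Nat.lt_pow_self Fintype.one_lt_card
    have h2 : q ^ (e - 1) ≤ q ^ ((e - 1) * v.natDegree) :=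
      Nat.pow_le_pow_right Fintype.card_pos (Nat.le_mul_of_pos_right _ hv.natDegree_pos)
    omega
  have hQ : q ^ ((e - 1) * v.natDegree) = ringChar F ^ (s * ((e - 1) * v.natDegree)) := by
    rw [hq, ← pow_mul]
  rw [pow_mul, hQ]
  exact (pow_dvd_pow v (hQ ▸ he)).trans (hfrob _)

theorem mk_powerSumV_eq_of_modEq {v : F[X]} (hv : Irreducible v) (e i : ℕ) {m l : ℕ}
    (h : m ≡ l [MOD (Fintype.card F ^ v.natDegree - 1) *
      Fintype.card F ^ ((e - 1) * v.natDegree)]) :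
    Ideal.Quotient.mk (Ideal.span {v ^ e}) (powerSumV F v i m) =
      Ideal.Quotient.mk (Ideal.span {v ^ e}) (powerSumV F v i l) := by
  have hfin : {n : F[X] | n.Monic ∧ n.natDegree = i ∧ ¬ v ∣ n}.Finite :=
    (finite_setOf_monic_natDegree_eq i).subset fun n hn => ⟨hn.1, hn.2.1⟩
  refine map_finsum_mem_congr _ (hfin.inter_of_left _) (hfin.inter_of_left _) fun n hn => ?_
  rw [map_pow, map_pow]
  refine pow_eq_pow_of_modEq h ?_
  rw [← map_pow, ← map_one (Ideal.Quotient.mk _), Ideal.Quotient.eq, Ideal.mem_span_singleton]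
  exact pow_dvd_pow_sub_one_of_not_dvd hv hn.2.2 e

theorem finite_support_prod_powerSumV {v : F[X]} (hv : v.Monic) (r : ℕ) (m : ℕ → ℕ) :
    (Function.support fun i : Fin r → ℕ => ∏ j, powerSumV F v (i j) (m j)).Finite := by
  refine (Set.Finite.pi' (t := fun j : Fin r => Set.Iic (m j + v.natDegree))
    fun _ => Set.finite_Iic _).subset fun i hi j => Set.mem_Iic.mpr ?_
  by_contra! hj
  exact hi (Finset.prod_eq_zero (Finset.mem_univ j) (powerSumV_eq_zero_of_lt hv hj))

end

theorem zetaV_kummer_general (F : Type*) [Field F] [Fintype F] (v : Polynomial F)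
    (hv : v.Monic) (hvirr : Irreducible v)
    (e r : ℕ) (m l : ℕ → ℕ)
    (h : ∀ i < r, m i ≡ l i
      [MOD (Fintype.card F ^ v.natDegree - 1) *
        Fintype.card F ^ ((e - 1) * v.natDegree)]) :
    v ^ e ∣ zetaV F v r m - zetaV F v r l := by
  rw [← Ideal.mem_span_singleton, ← Ideal.Quotient.eq]
  refine map_finsum_mem_congr _ ((finite_support_prod_powerSumV hv r m).inter_of_right _)
    ((finite_support_prod_powerSumV hv r l).inter_of_right _) fun i _ => ?_
  simp only [map_prod]
  exact Finset.prod_congr rfl fun j _ => mk_powerSumV_eq_of_modEq hvirr e (i j) (h j j.isLt)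

/-- Kummer-type congruence for v-adic multiple zeta values:
if `m_i ≡ l_i mod (q^d - 1)·q^{(e-1)d}` for all `1 ≤ i ≤ r`, then
`v^e ∣ ζ_v(-m_1, …, -m_r) - ζ_v(-l_1, …, -l_r)`. -/
theorem zetaV_kummer (F : Type*) [Field F] [Fintype F] (v : Polynomial F)
    (hv : v.Monic) (hvirr : Irreducible v) (hd : 0 < v.natDegree)
    (e r : ℕ) (he : 1 ≤ e) (hr : 1 ≤ r) (m l : ℕ → ℕ)
    (h : ∀ i < r, m i ≡ l i
      [MOD (Fintype.card F ^ v.natDegree - 1) *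
        Fintype.card F ^ ((e - 1) * v.natDegree)]) :
    v ^ e ∣ zetaV F v r m - zetaV F v r l :=
  zetaV_kummer_general F v hv hvirr e r m l h
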